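/- arXiv:1610.03385 — 3 statements merged into one kernel-verified Lean document; each statement's English description precedes it below -/
import Mathlib

section
/- Let t ≥ 0 and suppose 30t+17, 30t+19, 30t+23, 30t+29, 30t+31 are all prime. Let b = 30t+17, a = 30t+19. Then H_a(10) = 30t+34 and H_b(10) = 30t+33, and consequently H_a(n) = H_b(n) for all n ≥ 11. -/
/-- The H-sequence with starting value `c`: `Hseq c 2 = c` and for `n ≥ 2`,
`Hseq c (n+1)` is the least `m > Hseq c n` with (`m` prime ↔ `n+1` prime). -/
noncomputable def Hseq (c : ℕ) : ℕ → ℕ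
  | 0 => c
  | 1 => c
  | 2 => c
  | n + 3 => sInf {m | Hseq c (n + 2) < m ∧ (Nat.Prime m ↔ Nat.Prime (n + 3))}

lemma myInf {s : Set ℕ} {a : ℕ} (ha : a ∈ s) (hmin : ∀ b < a, b ∉ s) : sInf s = a := by
  have h1 := Nat.sInf_le ha
  rcases h1.lt_or_eq with h | h
  · exact absurd (Nat.sInf_mem ⟨a, ha⟩) (hmin _ h)
  · exact h

lemma not_prime_of_dvd {d n : ℕ} (hd : d ∣ n) (h1 : d ≠ 1) (h2 : d ≠ n) : ¬ n.Prime :=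
  fun h => by rcases h.eq_one_or_self_of_dvd d hd with h | h <;> contradiction

lemma Hseq_succ (c n : ℕ) :
    Hseq c (n+3) = sInf {m | Hseq c (n+2) < m ∧ (Nat.Prime m ↔ Nat.Prime (n+3))} := rfl

lemma step (c n prev target : ℕ) (hprev : Hseq c (n+2) = prev)
    (hmem : prev < target ∧ (target.Prime ↔ (n+3).Prime))
    (hmin : ∀ b, prev < b → b < target → ¬(b.Prime ↔ (n+3).Prime)) :
    Hseq c (n+3) = target := by
  show sInf {m | Hseq c (n + 2) < m ∧ (Nat.Prime m ↔ Nat.Prime (n + 3))} = target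
  rw [hprev]
  exact myInf hmem (fun b hb hbs => hmin b hbs.1 hb hbs.2)

lemma np2 {k : ℕ} (h : 2 ≤ k) : ¬ Nat.Prime (2 * k) :=
  not_prime_of_dvd ⟨k, rfl⟩ (by norm_num) (by omega)

lemma np3 {k : ℕ} (h : 2 ≤ k) : ¬ Nat.Prime (3 * k) :=
  not_prime_of_dvd ⟨k, rfl⟩ (by norm_num) (by omega)

lemma np5 {k : ℕ} (h : 2 ≤ k) : ¬ Nat.Prime (5 * k) :=
  not_prime_of_dvd ⟨k, rfl⟩ (by norm_num) (by omega)

theorem stmt1 (t : ℕ) (h17 : Nat.Prime (30*t+17)) (h19 : Nat.Prime (30*t+19))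
    (h23 : Nat.Prime (30*t+23)) (h29 : Nat.Prime (30*t+29)) (h31 : Nat.Prime (30*t+31)) :
    Hseq (30*t+19) 10 = 30*t+34 ∧ Hseq (30*t+17) 10 = 30*t+33 ∧
      ∀ n, 11 ≤ n → Hseq (30*t+19) n = Hseq (30*t+17) n := by
  -- composite facts
  have c18 : ¬ Nat.Prime (30*t+18) := by have := np2 (k := 15*t+9) (by omega); convert this using 2; ring
  have c20 : ¬ Nat.Prime (30*t+20) := by have := np2 (k := 15*t+10) (by omega); convert this using 2; ring
  have c21 : ¬ Nat.Prime (30*t+21) := by have := np3 (k := 10*t+7) (by omega); convert this using 2; ring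
  have c22 : ¬ Nat.Prime (30*t+22) := by have := np2 (k := 15*t+11) (by omega); convert this using 2; ring
  have c24 : ¬ Nat.Prime (30*t+24) := by have := np2 (k := 15*t+12) (by omega); convert this using 2; ring
  have c25 : ¬ Nat.Prime (30*t+25) := by have := np5 (k := 6*t+5) (by omega); convert this using 2; ring
  have c26 : ¬ Nat.Prime (30*t+26) := by have := np2 (k := 15*t+13) (by omega); convert this using 2; ring
  have c27 : ¬ Nat.Prime (30*t+27) := by have := np3 (k := 10*t+9) (by omega); convert this using 2; ring
  have c28 : ¬ Nat.Prime (30*t+28) := by have := np2 (k := 15*t+14) (by omega); convert this using 2; ring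
  have c30 : ¬ Nat.Prime (30*t+30) := by have := np2 (k := 15*t+15) (by omega); convert this using 2; ring
  have c32 : ¬ Nat.Prime (30*t+32) := by have := np2 (k := 15*t+16) (by omega); convert this using 2; ring
  have c33 : ¬ Nat.Prime (30*t+33) := by have := np3 (k := 10*t+11) (by omega); convert this using 2; ring
  have c34 : ¬ Nat.Prime (30*t+34) := by have := np2 (k := 15*t+17) (by omega); convert this using 2; ring
  -- sequence a = 30t+19
  have a2 : Hseq (30*t+19) 2 = 30*t+19 := rfl
  have a3 : Hseq (30*t+19) 3 = 30*t+23 := by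
    apply step _ 0 _ _ a2
    · exact ⟨by omega, by simp [h23]; norm_num⟩
    · intro b hb1 hb2
      have : b = 30*t+20 ∨ b = 30*t+21 ∨ b = 30*t+22 := by omega
      rcases this with h | h | h <;> subst h <;> simp [c20, c21, c22] <;> norm_num
  have a4 : Hseq (30*t+19) 4 = 30*t+24 := by
    apply step _ 1 _ _ a3
    · exact ⟨by omega, by simp [c24]; norm_num⟩
    · intro b hb1 hb2; omega
  have a5 : Hseq (30*t+19) 5 = 30*t+29 := by
    apply step _ 2 _ _ a4
    · exact ⟨by omega, by simp [h29]; norm_num⟩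
    · intro b hb1 hb2
      have : b = 30*t+25 ∨ b = 30*t+26 ∨ b = 30*t+27 ∨ b = 30*t+28 := by omega
      rcases this with h | h | h | h <;> subst h <;> simp [c25, c26, c27, c28] <;> norm_num
  have a6 : Hseq (30*t+19) 6 = 30*t+30 := by
    apply step _ 3 _ _ a5
    · exact ⟨by omega, by simp [c30]; norm_num⟩
    · intro b hb1 hb2; omega
  have a7 : Hseq (30*t+19) 7 = 30*t+31 := by
    apply step _ 4 _ _ a6
    · exact ⟨by omega, by simp [h31]; norm_num⟩
    · intro b hb1 hb2; omega
  have a8 : Hseq (30*t+19) 8 = 30*t+32 := by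
    apply step _ 5 _ _ a7
    · exact ⟨by omega, by simp [c32]; norm_num⟩
    · intro b hb1 hb2; omega
  have a9 : Hseq (30*t+19) 9 = 30*t+33 := by
    apply step _ 6 _ _ a8
    · exact ⟨by omega, by simp [c33]; norm_num⟩
    · intro b hb1 hb2; omega
  have a10 : Hseq (30*t+19) 10 = 30*t+34 := by
    apply step _ 7 _ _ a9
    · exact ⟨by omega, by simp [c34]; norm_num⟩
    · intro b hb1 hb2; omega
  -- sequence b = 30t+17
  have b2 : Hseq (30*t+17) 2 = 30*t+17 := rfl
  have b3 : Hseq (30*t+17) 3 = 30*t+19 := by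
    apply step _ 0 _ _ b2
    · exact ⟨by omega, by simp [h19]; norm_num⟩
    · intro b hb1 hb2
      have : b = 30*t+18 := by omega
      subst this; simp [c18]; norm_num
  have b4 : Hseq (30*t+17) 4 = 30*t+20 := by
    apply step _ 1 _ _ b3
    · exact ⟨by omega, by simp [c20]; norm_num⟩
    · intro b hb1 hb2; omega
  have b5 : Hseq (30*t+17) 5 = 30*t+23 := by
    apply step _ 2 _ _ b4
    · exact ⟨by omega, by simp [h23]; norm_num⟩
    · intro b hb1 hb2
      have : b = 30*t+21 ∨ b = 30*t+22 := by omega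
      rcases this with h | h <;> subst h <;> simp [c21, c22] <;> norm_num
  have b6 : Hseq (30*t+17) 6 = 30*t+24 := by
    apply step _ 3 _ _ b5
    · exact ⟨by omega, by simp [c24]; norm_num⟩
    · intro b hb1 hb2; omega
  have b7 : Hseq (30*t+17) 7 = 30*t+29 := by
    apply step _ 4 _ _ b6
    · exact ⟨by omega, by simp [h29]; norm_num⟩
    · intro b hb1 hb2
      have : b = 30*t+25 ∨ b = 30*t+26 ∨ b = 30*t+27 ∨ b = 30*t+28 := by omega
      rcases this with h | h | h | h <;> subst h <;> simp [c25, c26, c27, c28] <;> norm_num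
  have b8 : Hseq (30*t+17) 8 = 30*t+30 := by
    apply step _ 5 _ _ b7
    · exact ⟨by omega, by simp [c30]; norm_num⟩
    · intro b hb1 hb2; omega
  have b9 : Hseq (30*t+17) 9 = 30*t+32 := by
    apply step _ 6 _ _ b8
    · exact ⟨by omega, by simp [c32]; norm_num⟩
    · intro b hb1 hb2
      have : b = 30*t+31 := by omega
      subst this; simp [h31]; norm_num
  have b10 : Hseq (30*t+17) 10 = 30*t+33 := by
    apply step _ 7 _ _ b9
    · exact ⟨by omega, by simp [c33]; norm_num⟩
    · intro b hb1 hb2; omega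
  refine ⟨a10, b10, ?_⟩
  -- merge at 11
  have h11 : Hseq (30*t+19) 11 = Hseq (30*t+17) 11 := by
    rw [show Hseq (30*t+19) 11 = sInf {m | Hseq (30*t+19) 10 < m ∧ (Nat.Prime m ↔ Nat.Prime 11)} from rfl,
      show Hseq (30*t+17) 11 = sInf {m | Hseq (30*t+17) 10 < m ∧ (Nat.Prime m ↔ Nat.Prime 11)} from rfl,
      a10, b10]
    congr 1
    ext m
    simp only [Set.mem_setOf_eq]
    constructor
    · rintro ⟨h1, h2⟩; exact ⟨by omega, h2⟩
    · rintro ⟨h1, h2⟩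
      refine ⟨?_, h2⟩
      have hm : m.Prime := h2.mpr (by norm_num)
      have : m ≠ 30*t+34 := fun e => c34 (e ▸ hm)
      omega
  intro n hn
  induction n, hn using Nat.le_induction with
  | base => exact h11
  | succ n hn ih =>
    obtain ⟨k, rfl⟩ : ∃ k, n = k + 2 := ⟨n - 2, by omega⟩
    show sInf {m | Hseq (30*t+19) (k+2) < m ∧ (Nat.Prime m ↔ Nat.Prime (k+3))} =
      sInf {m | Hseq (30*t+17) (k+2) < m ∧ (Nat.Prime m ↔ Nat.Prime (k+3))}
    rw [ih]
end

section
/- Let t ≥ 0 and suppose 30t+29, 30t+31, 30t+37, 30t+41, 30t+43 are all prime. Let b = 30t+29, a = 30t+31. Then H_a(3) = 30t+37 and H_b(3) = 30t+31, so H_a(3) − H_b(3) = 6, and this is the maximum of H_a(n) − H_b(n) over n ≥ 2; moreover H_a(n) = H_b(n) for all n ≥ 11. -/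
lemma Hseq_eq (c n : ℕ) :
    Hseq c (n + 3) = sInf {m | Hseq c (n + 2) < m ∧ (Nat.Prime m ↔ Nat.Prime (n + 3))} := rfl

lemma notp (a b : ℕ) {m : ℕ} (h : m = a * b) (ha : a ≠ 1) (hb : b ≠ 1) : ¬ m.Prime := by
  subst h; exact Nat.not_prime_mul ha hb

lemma myInf_s3 {x y : ℕ} {P : Prop} (hy : x < y) (hyP : Nat.Prime y ↔ P)
    (hmin : ∀ m, x < m → m < y → ¬(Nat.Prime m ↔ P)) :
    sInf {m | x < m ∧ (Nat.Prime m ↔ P)} = y := by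
  have hmem : y ∈ {m | x < m ∧ (Nat.Prime m ↔ P)} := ⟨hy, hyP⟩
  have h1 := Nat.sInf_mem ⟨y, hmem⟩
  have h2 := Nat.sInf_le hmem
  rcases lt_or_eq_of_le h2 with h | h
  · exact absurd h1.2 (hmin _ h1.1 h)
  · exact h

lemma Hstep (c n x y : ℕ) (hx : Hseq c (n + 2) = x) (hy : x < y)
    (hyP : Nat.Prime y ↔ Nat.Prime (n + 3))
    (hmin : ∀ m, x < m → m < y → ¬(Nat.Prime m ↔ Nat.Prime (n + 3))) :
    Hseq c (n + 3) = y := by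
  rw [Hseq_eq, hx]; exact myInf_s3 hy hyP hmin

lemma hminp {m k : ℕ} (hk : Nat.Prime k) (hm : ¬ m.Prime) : ¬(m.Prime ↔ k.Prime) :=
  fun h => hm (h.mpr hk)

lemma hminc {m k : ℕ} (hk : ¬ Nat.Prime k) (hm : m.Prime) : ¬(m.Prime ↔ k.Prime) :=
  fun h => hk (h.mp hm)

theorem stmt3 (t : ℕ) (h29 : Nat.Prime (30*t+29)) (h31 : Nat.Prime (30*t+31))
    (h37 : Nat.Prime (30*t+37)) (h41 : Nat.Prime (30*t+41)) (h43 : Nat.Prime (30*t+43)) :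
    Hseq (30*t+31) 3 = 30*t+37 ∧ Hseq (30*t+29) 3 = 30*t+31 ∧
      Hseq (30*t+31) 3 - Hseq (30*t+29) 3 = 6 ∧
      (∀ n, 2 ≤ n → Hseq (30*t+31) n - Hseq (30*t+29) n ≤ 6) ∧
      ∀ n, 11 ≤ n → Hseq (30*t+31) n = Hseq (30*t+29) n := by
  have p3 : Nat.Prime 3 := by norm_num
  have p5 : Nat.Prime 5 := by norm_num
  have p7 : Nat.Prime 7 := by norm_num
  have p11 : Nat.Prime 11 := by norm_num
  have c4 : ¬ Nat.Prime 4 := by norm_num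
  have c6 : ¬ Nat.Prime 6 := by norm_num
  have c8 : ¬ Nat.Prime 8 := by norm_num
  have c9 : ¬ Nat.Prime 9 := by norm_num
  have c10 : ¬ Nat.Prime 10 := by norm_num
  -- composite numbers around
  have n30 : ¬ Nat.Prime (30*t+30) := notp 2 (15*t+15) (by ring) (by norm_num) (by omega)
  have n32 : ¬ Nat.Prime (30*t+32) := notp 2 (15*t+16) (by ring) (by norm_num) (by omega)
  have n33 : ¬ Nat.Prime (30*t+33) := notp 3 (10*t+11) (by ring) (by norm_num) (by omega)
  have n34 : ¬ Nat.Prime (30*t+34) := notp 2 (15*t+17) (by ring) (by norm_num) (by omega)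
  have n35 : ¬ Nat.Prime (30*t+35) := notp 5 (6*t+7) (by ring) (by norm_num) (by omega)
  have n36 : ¬ Nat.Prime (30*t+36) := notp 2 (15*t+18) (by ring) (by norm_num) (by omega)
  have n38 : ¬ Nat.Prime (30*t+38) := notp 2 (15*t+19) (by ring) (by norm_num) (by omega)
  have n39 : ¬ Nat.Prime (30*t+39) := notp 3 (10*t+13) (by ring) (by norm_num) (by omega)
  have n40 : ¬ Nat.Prime (30*t+40) := notp 2 (15*t+20) (by ring) (by norm_num) (by omega)
  have n42 : ¬ Nat.Prime (30*t+42) := notp 2 (15*t+21) (by ring) (by norm_num) (by omega)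
  have n44 : ¬ Nat.Prime (30*t+44) := notp 2 (15*t+22) (by ring) (by norm_num) (by omega)
  have n45 : ¬ Nat.Prime (30*t+45) := notp 5 (6*t+9) (by ring) (by norm_num) (by omega)
  have n46 : ¬ Nat.Prime (30*t+46) := notp 2 (15*t+23) (by ring) (by norm_num) (by omega)
  -- sequence with start b = 30t+29
  have hb3 : Hseq (30*t+29) 3 = 30*t+31 := by
    refine Hstep _ 0 (30*t+29) _ rfl (by omega) (iff_of_true h31 p3) ?_
    intro m h1 h2
    have : m = 30*t+30 := by omega
    subst this; exact hminp p3 n30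
  have hb4 : Hseq (30*t+29) 4 = 30*t+32 := by
    refine Hstep _ 1 _ _ hb3 (by omega) (iff_of_false n32 c4) ?_
    intro m h1 h2; omega
  have hb5 : Hseq (30*t+29) 5 = 30*t+37 := by
    refine Hstep _ 2 _ _ hb4 (by omega) (iff_of_true h37 p5) ?_
    intro m h1 h2
    have : m = 30*t+33 ∨ m = 30*t+34 ∨ m = 30*t+35 ∨ m = 30*t+36 := by omega
    rcases this with rfl | rfl | rfl | rfl
    exacts [hminp p5 n33, hminp p5 n34, hminp p5 n35, hminp p5 n36]
  have hb6 : Hseq (30*t+29) 6 = 30*t+38 := by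
    refine Hstep _ 3 _ _ hb5 (by omega) (iff_of_false n38 c6) ?_
    intro m h1 h2; omega
  have hb7 : Hseq (30*t+29) 7 = 30*t+41 := by
    refine Hstep _ 4 _ _ hb6 (by omega) (iff_of_true h41 p7) ?_
    intro m h1 h2
    have : m = 30*t+39 ∨ m = 30*t+40 := by omega
    rcases this with rfl | rfl
    exacts [hminp p7 n39, hminp p7 n40]
  have hb8 : Hseq (30*t+29) 8 = 30*t+42 := by
    refine Hstep _ 5 _ _ hb7 (by omega) (iff_of_false n42 c8) ?_
    intro m h1 h2; omega
  have hb9 : Hseq (30*t+29) 9 = 30*t+44 := by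
    refine Hstep _ 6 _ _ hb8 (by omega) (iff_of_false n44 c9) ?_
    intro m h1 h2
    have : m = 30*t+43 := by omega
    subst this; exact hminc c9 h43
  have hb10 : Hseq (30*t+29) 10 = 30*t+45 := by
    refine Hstep _ 7 _ _ hb9 (by omega) (iff_of_false n45 c10) ?_
    intro m h1 h2; omega
  -- sequence with start a = 30t+31
  have ha3 : Hseq (30*t+31) 3 = 30*t+37 := by
    refine Hstep _ 0 (30*t+31) _ rfl (by omega) (iff_of_true h37 p3) ?_
    intro m h1 h2
    have : m = 30*t+32 ∨ m = 30*t+33 ∨ m = 30*t+34 ∨ m = 30*t+35 ∨ m = 30*t+36 := by omega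
    rcases this with rfl | rfl | rfl | rfl | rfl
    exacts [hminp p3 n32, hminp p3 n33, hminp p3 n34, hminp p3 n35, hminp p3 n36]
  have ha4 : Hseq (30*t+31) 4 = 30*t+38 := by
    refine Hstep _ 1 _ _ ha3 (by omega) (iff_of_false n38 c4) ?_
    intro m h1 h2; omega
  have ha5 : Hseq (30*t+31) 5 = 30*t+41 := by
    refine Hstep _ 2 _ _ ha4 (by omega) (iff_of_true h41 p5) ?_
    intro m h1 h2
    have : m = 30*t+39 ∨ m = 30*t+40 := by omega
    rcases this with rfl | rfl
    exacts [hminp p5 n39, hminp p5 n40]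
  have ha6 : Hseq (30*t+31) 6 = 30*t+42 := by
    refine Hstep _ 3 _ _ ha5 (by omega) (iff_of_false n42 c6) ?_
    intro m h1 h2; omega
  have ha7 : Hseq (30*t+31) 7 = 30*t+43 := by
    refine Hstep _ 4 _ _ ha6 (by omega) (iff_of_true h43 p7) ?_
    intro m h1 h2; omega
  have ha8 : Hseq (30*t+31) 8 = 30*t+44 := by
    refine Hstep _ 5 _ _ ha7 (by omega) (iff_of_false n44 c8) ?_
    intro m h1 h2; omega
  have ha9 : Hseq (30*t+31) 9 = 30*t+45 := by
    refine Hstep _ 6 _ _ ha8 (by omega) (iff_of_false n45 c9) ?_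
    intro m h1 h2; omega
  have ha10 : Hseq (30*t+31) 10 = 30*t+46 := by
    refine Hstep _ 7 _ _ ha9 (by omega) (iff_of_false n46 c10) ?_
    intro m h1 h2; omega
  -- merge at 11
  have key : Hseq (30*t+31) 11 = Hseq (30*t+29) 11 := by
    have e1 : Hseq (30*t+31) 11
        = sInf {m | 30*t+46 < m ∧ (Nat.Prime m ↔ Nat.Prime 11)} := by
      rw [show (11:ℕ) = 8+3 from rfl, Hseq_eq]
      norm_num [ha10]
    have e2 : Hseq (30*t+29) 11
        = sInf {m | 30*t+45 < m ∧ (Nat.Prime m ↔ Nat.Prime 11)} := by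
      rw [show (11:ℕ) = 8+3 from rfl, Hseq_eq]
      norm_num [hb10]
    rw [e1, e2]
    congr 1
    ext m
    simp only [Set.mem_setOf_eq, p11, iff_true]
    constructor
    · rintro ⟨h1, h2⟩; exact ⟨by omega, h2⟩
    · rintro ⟨h1, h2⟩
      refine ⟨?_, h2⟩
      have : m ≠ 30*t+46 := by rintro rfl; exact n46 h2
      omega
  have heq : ∀ n, 11 ≤ n → Hseq (30*t+31) n = Hseq (30*t+29) n := by
    intro n hn
    induction n, hn using Nat.le_induction with
    | base => exact key
    | succ n hn ih =>
      obtain ⟨k, rfl⟩ : ∃ k, n = k + 10 := ⟨n - 10, by omega⟩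
      have e3 : k + 10 + 1 = k + 8 + 3 := by omega
      have e4 : k + 8 + 2 = k + 10 := by omega
      have estep : ∀ c, Hseq c (k + 10 + 1)
          = sInf {m | Hseq c (k + 10) < m ∧ (Nat.Prime m ↔ Nat.Prime (k + 10 + 1))} := by
        intro c; rw [e3, Hseq_eq, e4, ← e3]
      rw [estep, estep, ih]
  refine ⟨ha3, hb3, by rw [ha3, hb3]; omega, ?_, heq⟩
  intro n hn
  have : n = 2 ∨ n = 3 ∨ n = 4 ∨ n = 5 ∨ n = 6 ∨ n = 7 ∨ n = 8 ∨ n = 9 ∨ n = 10 ∨ 11 ≤ n := by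
    omega
  rcases this with rfl | rfl | rfl | rfl | rfl | rfl | rfl | rfl | rfl | h
  · show (30*t+31) - (30*t+29) ≤ 6; omega
  · rw [ha3, hb3]; omega
  · rw [ha4, hb4]; omega
  · rw [ha5, hb5]; omega
  · rw [ha6, hb6]; omega
  · rw [ha7, hb7]; omega
  · rw [ha8, hb8]; omega
  · rw [ha9, hb9]; omega
  · rw [ha10, hb10]; omega
  · rw [heq n h]; omega
end

section
/- Let t ≥ 0, b = 30t+17, a = 30t+19, and suppose 30t+17, 30t+19, 30t+23, 30t+29 are prime but 30t+31 is composite. Then H_a(7) ≥ 30t+37 and H_b(7) = 30t+29, so H_a(7) − H_b(7) ≥ 8, and the least n with H_a(n) − H_b(n) > 6 is n = 7. -/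
lemma Hseq_unfold (c n : ℕ) :
    Hseq c (n+3) = sInf {m | Hseq c (n + 2) < m ∧ (Nat.Prime m ↔ Nat.Prime (n + 3))} := by
  rw [Hseq]

lemma Hseq_step (c x y k : ℕ) (hx : Hseq c (k+2) = x) (hlt : x < y)
    (hy : Nat.Prime y ↔ Nat.Prime (k+3))
    (hmin : ∀ m, x < m → m < y → ¬(Nat.Prime m ↔ Nat.Prime (k+3))) :
    Hseq c (k+3) = y := by
  rw [Hseq_unfold, hx]
  apply le_antisymm
  · exact Nat.sInf_le ⟨hlt, hy⟩
  · refine le_csInf ⟨y, hlt, hy⟩ ?_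
    rintro m ⟨h1, h2⟩
    by_contra h
    push_neg at h
    exact hmin m h1 h h2

lemma Hseq_step_ge (c x y k : ℕ) (hx : Hseq c (k+2) = x)
    (hne : ∃ m, x < m ∧ (Nat.Prime m ↔ Nat.Prime (k+3)))
    (hmin : ∀ m, x < m → m < y → ¬(Nat.Prime m ↔ Nat.Prime (k+3))) :
    y ≤ Hseq c (k+3) := by
  rw [Hseq_unfold, hx]
  refine le_csInf hne ?_
  rintro m ⟨h1, h2⟩
  by_contra h'
  push_neg at h'
  exact hmin m h1 h' h2

lemma np (a b n : ℕ) (h : n = a * b) (ha : a ≠ 1) (hb : b ≠ 1) : ¬ Nat.Prime n := by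
  rw [h]; exact Nat.not_prime_mul ha hb

theorem stmt7 (t : ℕ) (h17 : Nat.Prime (30*t+17)) (h19 : Nat.Prime (30*t+19))
    (h23 : Nat.Prime (30*t+23)) (h29 : Nat.Prime (30*t+29)) (h31 : ¬ Nat.Prime (30*t+31)) :
    30*t+37 ≤ Hseq (30*t+19) 7 ∧ Hseq (30*t+17) 7 = 30*t+29 ∧
      8 ≤ Hseq (30*t+19) 7 - Hseq (30*t+17) 7 ∧
      IsLeast {n | 2 ≤ n ∧ 6 < Hseq (30*t+19) n - Hseq (30*t+17) n} 7 := by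
  have c18 : ¬ Nat.Prime (30*t+18) := np 2 (15*t+9) _ (by ring) (by omega) (by omega)
  have c20 : ¬ Nat.Prime (30*t+20) := np 2 (15*t+10) _ (by ring) (by omega) (by omega)
  have c21 : ¬ Nat.Prime (30*t+21) := np 3 (10*t+7) _ (by ring) (by omega) (by omega)
  have c22 : ¬ Nat.Prime (30*t+22) := np 2 (15*t+11) _ (by ring) (by omega) (by omega)
  have c24 : ¬ Nat.Prime (30*t+24) := np 2 (15*t+12) _ (by ring) (by omega) (by omega)
  have c25 : ¬ Nat.Prime (30*t+25) := np 5 (6*t+5) _ (by ring) (by omega) (by omega)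
  have c26 : ¬ Nat.Prime (30*t+26) := np 2 (15*t+13) _ (by ring) (by omega) (by omega)
  have c27 : ¬ Nat.Prime (30*t+27) := np 3 (10*t+9) _ (by ring) (by omega) (by omega)
  have c28 : ¬ Nat.Prime (30*t+28) := np 2 (15*t+14) _ (by ring) (by omega) (by omega)
  have c30 : ¬ Nat.Prime (30*t+30) := np 2 (15*t+15) _ (by ring) (by omega) (by omega)
  have c32 : ¬ Nat.Prime (30*t+32) := np 2 (15*t+16) _ (by ring) (by omega) (by omega)
  have c33 : ¬ Nat.Prime (30*t+33) := np 3 (10*t+11) _ (by ring) (by omega) (by omega)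
  have c34 : ¬ Nat.Prime (30*t+34) := np 2 (15*t+17) _ (by ring) (by omega) (by omega)
  have c35 : ¬ Nat.Prime (30*t+35) := np 5 (6*t+7) _ (by ring) (by omega) (by omega)
  have c36 : ¬ Nat.Prime (30*t+36) := np 2 (15*t+18) _ (by ring) (by omega) (by omega)
  have p3 : Nat.Prime 3 := by norm_num
  have p5 : Nat.Prime 5 := by norm_num
  have p7 : Nat.Prime 7 := by norm_num
  have np4 : ¬ Nat.Prime 4 := by norm_num
  have np6 : ¬ Nat.Prime 6 := by norm_num
  -- sequence starting at 30t+17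
  have hb2 : Hseq (30*t+17) 2 = 30*t+17 := rfl
  have hb3 : Hseq (30*t+17) 3 = 30*t+19 :=
    Hseq_step _ _ _ 0 hb2 (by omega) (iff_of_true h19 p3)
      (fun m h1 h2 hiff => by
        have hm : m = 30*t+18 := by omega
        exact c18 (hm ▸ hiff.mpr p3))
  have hb4 : Hseq (30*t+17) 4 = 30*t+20 :=
    Hseq_step _ _ _ 1 hb3 (by omega) (iff_of_false c20 np4)
      (fun m h1 h2 hiff => by omega)
  have hb5 : Hseq (30*t+17) 5 = 30*t+23 :=
    Hseq_step _ _ _ 2 hb4 (by omega) (iff_of_true h23 p5)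
      (fun m h1 h2 hiff => by
        have hp := hiff.mpr p5
        have hm : m = 30*t+21 ∨ m = 30*t+22 := by omega
        rcases hm with hm | hm <;> subst hm
        · exact c21 hp
        · exact c22 hp)
  have hb6 : Hseq (30*t+17) 6 = 30*t+24 :=
    Hseq_step _ _ _ 3 hb5 (by omega) (iff_of_false c24 np6)
      (fun m h1 h2 hiff => by omega)
  have hb7 : Hseq (30*t+17) 7 = 30*t+29 :=
    Hseq_step _ _ _ 4 hb6 (by omega) (iff_of_true h29 p7)
      (fun m h1 h2 hiff => by
        have hp := hiff.mpr p7
        have hm : m = 30*t+25 ∨ m = 30*t+26 ∨ m = 30*t+27 ∨ m = 30*t+28 := by omega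
        rcases hm with hm | hm | hm | hm <;> subst hm
        · exact c25 hp
        · exact c26 hp
        · exact c27 hp
        · exact c28 hp)
  -- sequence starting at 30t+19
  have ha2 : Hseq (30*t+19) 2 = 30*t+19 := rfl
  have ha3 : Hseq (30*t+19) 3 = 30*t+23 :=
    Hseq_step _ _ _ 0 ha2 (by omega) (iff_of_true h23 p3)
      (fun m h1 h2 hiff => by
        have hp := hiff.mpr p3
        have hm : m = 30*t+20 ∨ m = 30*t+21 ∨ m = 30*t+22 := by omega
        rcases hm with hm | hm | hm <;> subst hm
        · exact c20 hp
        · exact c21 hp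
        · exact c22 hp)
  have ha4 : Hseq (30*t+19) 4 = 30*t+24 :=
    Hseq_step _ _ _ 1 ha3 (by omega) (iff_of_false c24 np4)
      (fun m h1 h2 hiff => by omega)
  have ha5 : Hseq (30*t+19) 5 = 30*t+29 :=
    Hseq_step _ _ _ 2 ha4 (by omega) (iff_of_true h29 p5)
      (fun m h1 h2 hiff => by
        have hp := hiff.mpr p5
        have hm : m = 30*t+25 ∨ m = 30*t+26 ∨ m = 30*t+27 ∨ m = 30*t+28 := by omega
        rcases hm with hm | hm | hm | hm <;> subst hm
        · exact c25 hp
        · exact c26 hp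
        · exact c27 hp
        · exact c28 hp)
  have ha6 : Hseq (30*t+19) 6 = 30*t+30 :=
    Hseq_step _ _ _ 3 ha5 (by omega) (iff_of_false c30 np6)
      (fun m h1 h2 hiff => by omega)
  have ha7 : 30*t+37 ≤ Hseq (30*t+19) 7 := by
    refine Hseq_step_ge _ _ _ 4 ha6 ?_ ?_
    · obtain ⟨p, hp, hpp⟩ := Nat.exists_infinite_primes (30*t+31)
      exact ⟨p, by omega, iff_of_true hpp p7⟩
    · intro m h1 h2 hiff
      have hp := hiff.mpr p7
      have hm : m = 30*t+31 ∨ m = 30*t+32 ∨ m = 30*t+33 ∨ m = 30*t+34 ∨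
          m = 30*t+35 ∨ m = 30*t+36 := by omega
      rcases hm with hm | hm | hm | hm | hm | hm <;> subst hm
      · exact h31 hp
      · exact c32 hp
      · exact c33 hp
      · exact c34 hp
      · exact c35 hp
      · exact c36 hp
  refine ⟨ha7, hb7, by omega, ⟨⟨by norm_num, by rw [hb7]; omega⟩, ?_⟩⟩
  rintro n ⟨hn2, hn6⟩
  by_contra hlt
  push_neg at hlt
  interval_cases n
  · rw [ha2, hb2] at hn6; omega
  · rw [ha3, hb3] at hn6; omega
  · rw [ha4, hb4] at hn6; omega
  · rw [ha5, hb5] at hn6; omega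
  · rw [ha6, hb6] at hn6; omega
end
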